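/- arXiv:2110.03808 — 3 statements merged into one kernel-verified Lean document; each statement's English description precedes it below -/
import Mathlib

section
/- Fix m ∈ ℤ and i ≥ m. The partial-sum functional (s,a) ↦ Σ_{j=m}^{i} D_{m,0}(s,a)_j of the empty-start queueing map is monotone non-decreasing in both arguments: if s^1 ≤ s^2 and a^1 ≤ a^2 entrywise, then Σ_{j=m}^{i} D_{m,0}(s^1,a^1)_j ≤ Σ_{j=m}^{i} D_{m,0}(s^2,a^2)_j. -/
open Filter

namespace SH

noncomputable def pospart (x : ℝ) : ℝ := max x 0
noncomputable def negpart (x : ℝ) : ℝ := max (-x) 0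

noncomputable def wait (s a : ℤ → ℝ) (i : ℤ) : ℝ :=
  sSup ((fun j => pospart (∑ k ∈ Finset.Icc j i, (s (k - 1) - a k))) '' Set.Iic i)

noncomputable def Dq (s a : ℤ → ℝ) (i : ℤ) : ℝ :=
  negpart (wait s a (i - 1) + s (i - 1) - a i) + s i

def Stable (s a : ℤ → ℝ) : Prop :=
  Tendsto (fun m : ℤ => ∑ i ∈ Finset.Icc m 0, (s (i - 1) - a i)) atBot atBot

/-- Sojourn times of the queue started empty at time `m`: `Jp s a m k` is `J'_{m-1+k}`,
with `J'_{m-1} = 0` and `J'_i = (a_i - J'_{i-1})^- + s_i` for `i ≥ m`. -/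
noncomputable def Jp (s a : ℤ → ℝ) (m : ℤ) : ℕ → ℝ
  | 0 => 0
  | k + 1 => negpart (a (m + (k : ℤ)) - Jp s a m k) + s (m + (k : ℤ))

/-- The queueing map started empty at time `m`:
`D_{m,0}(s,a)_i = (J'_{i-1} - a_i)^- + s_i` for `i ≥ m`. -/
noncomputable def Dm0 (s a : ℤ → ℝ) (m i : ℤ) : ℝ :=
  negpart (Jp s a m (i - m).toNat - a i) + s i

/-! Adding to the sojourn time `J'_{m-1+k}` the arrival epoch `A_k = ∑_{j<k} a_{m+j}` gives the
departure time `dep_k` of the `k`-th customer. It obeys `dep_{k+1} = max(dep_k, A_{k+1}) + s_{m+k}`,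
hence is monotone in both `s` and `a`; and `D_{m,0}(s,a)` is its sequence of increments, so the
partial sums of `D_{m,0}` telescope to a departure time. -/

open Finset

lemma sum_Icc_eq_sum_range {M : Type*} [AddCommMonoid M] (f : ℤ → M) (m : ℤ) (N : ℕ) :
    ∑ j ∈ Icc m (m + N), f j = ∑ n ∈ range (N + 1), f (m + n) := by
  refine sum_nbij' (fun j => (j - m).toNat) (fun n => m + n) ?_ ?_ ?_ ?_ ?_ <;>
    intros <;> simp_all; omega

noncomputable def departureTime (s a : ℤ → ℝ) (m : ℤ) (k : ℕ) : ℝ :=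
  Jp s a m k + ∑ j ∈ range k, a (m + j)

lemma departureTime_zero (s a : ℤ → ℝ) (m : ℤ) : departureTime s a m 0 = 0 := by
  simp [departureTime, Jp]

lemma departureTime_succ (s a : ℤ → ℝ) (m : ℤ) (k : ℕ) :
    departureTime s a m (k + 1) =
      max (departureTime s a m k) (∑ j ∈ range (k + 1), a (m + j)) + s (m + k) := by
  simp only [departureTime, Jp, negpart, sum_range_succ, neg_sub]
  have hmax :=
    max_add_add_right (Jp s a m k - a (m + k)) 0 (∑ j ∈ range k, a (m + j) + a (m + k))
  rw [sub_add_add_cancel, zero_add] at hmax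
  linarith

lemma departureTime_mono {s₁ s₂ a₁ a₂ : ℤ → ℝ} (hs : s₁ ≤ s₂) (ha : a₁ ≤ a₂)
    (m : ℤ) (k : ℕ) :
    departureTime s₁ a₁ m k ≤ departureTime s₂ a₂ m k := by
  induction k with
  | zero => rw [departureTime_zero, departureTime_zero]
  | succ k ih =>
    rw [departureTime_succ, departureTime_succ]
    gcongr
    · exact ha _
    · exact hs _

lemma departureTime_succ_sub (s a : ℤ → ℝ) (m : ℤ) (n : ℕ) :
    departureTime s a m (n + 1) - departureTime s a m n = Dm0 s a m (m + n) := by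
  have hidx : (m + n - m).toNat = n := by omega
  simp only [departureTime, Jp, Dm0, hidx, negpart, neg_sub, sum_range_succ]
  have hparts := max_zero_sub_max_neg_zero_eq_self (Jp s a m n - a (m + n))
  rw [neg_sub] at hparts
  linarith

lemma sum_Dm0_Icc (s a : ℤ → ℝ) (m : ℤ) (N : ℕ) :
    ∑ j ∈ Icc m (m + N), Dm0 s a m j = departureTime s a m (N + 1) := by
  simp_rw [sum_Icc_eq_sum_range, ← departureTime_succ_sub]
  rw [sum_range_sub, departureTime_zero, sub_zero]

/-- Monotonicity of partial sums of the empty-start queueing map in both arguments. -/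
theorem emptyStart_partialSum_mono (m i : ℤ) (him : m ≤ i) (s1 s2 a1 a2 : ℤ → ℝ)
    (hs : ∀ j, s1 j ≤ s2 j) (ha : ∀ j, a1 j ≤ a2 j) :
    ∑ j ∈ Finset.Icc m i, Dm0 s1 a1 m j ≤ ∑ j ∈ Finset.Icc m i, Dm0 s2 a2 m j := by
  obtain ⟨N, rfl⟩ : ∃ N : ℕ, i = m + N := ⟨(i - m).toNat, by omega⟩
  rw [sum_Dm0_Icc, sum_Dm0_Icc]
  exact departureTime_mono hs ha m (N + 1)

end SH
end

section
/- Let k = 2 base case: For integers m ≤ n and sequences I^0, I^1, I^2 ∈ ℝ^ℤ, Φ_{m,n}( D_{m,0}(I^1, I^2) - I^0 ) ≤ Φ_{m,n}(I^1 - I^0) + Φ_{m,n}(I^2 - I^1) + M_{m,n}(I^2), where Φ_{m,n}(I) = (sup_{m≤i≤n} Σ_{j=m}^{i} I_j)^+ and M_{m,n}(I) = max_{m≤i≤n} |I_i|. -/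
open Filter

namespace SH

/-- `Φ_{m,n}(I) = (sup_{m ≤ i ≤ n} ∑_{j=m}^i I_j)^+`. -/
noncomputable def Phi (m n : ℤ) (I : ℤ → ℝ) : ℝ :=
  pospart (sSup ((fun i => ∑ j ∈ Finset.Icc m i, I j) '' Set.Icc m n))

/-- `M_{m,n}(I) = max_{m ≤ i ≤ n} |I_i|`. -/
noncomputable def Mx (m n : ℤ) (I : ℤ → ℝ) : ℝ :=
  sSup ((fun i => |I i|) '' Set.Icc m n)

/-!
Write `J'_i` for the sojourn times of the queue started empty at `m` and `S_i = ∑_{j=m}^i (I¹_j - I²_j)`.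
Since `D_i = J'_i - J'_{i-1} + I²_i`, the partial sums of `D` telescope to `J'_i + ∑_{j=m}^i I²_j`.
Lindley's recursion gives `J'_i - S_i = max (J'_{i-1} - S_{i-1}) (I²_i - S_{i-1})`, and the new term
`I²_i + ∑_{j=m}^{i-1} (I²_j - I¹_j)` is at most `M_{m,n}(I²) + Φ_{m,n}(I² - I¹)`. Hence
`∑_{j=m}^i (D_j - I⁰_j) = (J'_i - S_i) + ∑_{j=m}^i (I¹_j - I⁰_j)` is bounded by the right-hand side.
-/

section Window

variable {m n : ℤ} {I : ℤ → ℝ}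

lemma Phi_nonneg (m n : ℤ) (I : ℤ → ℝ) : 0 ≤ Phi m n I := le_max_right _ _

lemma Mx_nonneg (m n : ℤ) (I : ℤ → ℝ) : 0 ≤ Mx m n I :=
  Real.sSup_nonneg <| by rintro _ ⟨i, -, rfl⟩; exact abs_nonneg _

/-- The empty sum `i = m - 1` is covered because `Φ` takes the positive part. -/
lemma sum_Icc_le_Phi {i : ℤ} (hmi : m - 1 ≤ i) (hin : i ≤ n) :
    ∑ j ∈ Finset.Icc m i, I j ≤ Phi m n I := by
  rcases hmi.eq_or_lt with rfl | hmi
  · simp [Phi_nonneg]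
  · rw [Phi, pospart]
    exact le_max_of_le_left <|
      le_csSup ((Set.finite_Icc m n).image _).bddAbove ⟨i, ⟨by omega, hin⟩, rfl⟩

lemma abs_le_Mx {i : ℤ} (hmi : m ≤ i) (hin : i ≤ n) : |I i| ≤ Mx m n I :=
  le_csSup ((Set.finite_Icc m n).image _).bddAbove ⟨i, ⟨hmi, hin⟩, rfl⟩

lemma Phi_le_of_forall_sum_le {c : ℝ} (hc : 0 ≤ c)
    (h : ∀ i, m ≤ i → i ≤ n → ∑ j ∈ Finset.Icc m i, I j ≤ c) : Phi m n I ≤ c :=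
  max_le (Real.sSup_le (by rintro _ ⟨i, ⟨hmi, hin⟩, rfl⟩; exact h i hmi hin) hc) hc

end Window

lemma sum_Icc_add_one {M : Type*} [AddCommMonoid M] {m i : ℤ} (h : m ≤ i + 1) (f : ℤ → M) :
    ∑ j ∈ Finset.Icc m (i + 1), f j = ∑ j ∈ Finset.Icc m i, f j + f (i + 1) := by
  rw [← Finset.insert_Icc_right_eq_Icc_add_one h, Finset.sum_insert (by simp), add_comm]

/-- `J'_i` of the queue started empty at `m`, indexed by the time `i` itself. -/
noncomputable def sojourn (s a : ℤ → ℝ) (m i : ℤ) : ℝ :=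
  Jp s a m (i + 1 - m).toNat

section Sojourn

variable (s a : ℤ → ℝ) {m i : ℤ}

@[simp]
lemma sojourn_start : sojourn s a m (m - 1) = 0 := by
  simp [sojourn, Jp]

lemma sojourn_add_one (h : m ≤ i + 1) :
    sojourn s a m (i + 1) = max (sojourn s a m i - a (i + 1)) 0 + s (i + 1) := by
  have hsucc : (i + 1 + 1 - m).toNat = (i + 1 - m).toNat + 1 := by omega
  have htime : m + ((i + 1 - m).toNat : ℤ) = i + 1 := by omega
  simp only [sojourn, hsucc, Jp, negpart, htime, neg_sub]

lemma Dm0_add_one (h : m ≤ i + 1) :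
    Dm0 s a m (i + 1) = sojourn s a m (i + 1) - sojourn s a m i + a (i + 1) := by
  rw [sojourn_add_one s a h]
  change max (-(sojourn s a m i - a (i + 1))) 0 + s (i + 1) = _
  rw [neg_sub]
  rcases le_total (sojourn s a m i) (a (i + 1)) with hle | hle
  · rw [max_eq_left (by linarith), max_eq_right (by linarith)]; ring
  · rw [max_eq_right (by linarith), max_eq_left (by linarith)]; ring

lemma sum_Dm0_eq (h : m - 1 ≤ i) :
    ∑ j ∈ Finset.Icc m i, Dm0 s a m j = sojourn s a m i + ∑ j ∈ Finset.Icc m i, a j := by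
  induction i, h using Int.leInduction with
  | base => simp
  | succ i hi ih =>
    rw [sum_Icc_add_one (by omega), sum_Icc_add_one (by omega), ih, Dm0_add_one s a (by omega)]
    ring

/-- Lindley's recursion, seen through the centred sojourn time `J'_i - S_i`. -/
lemma sojourn_sub_sum_add_one (h : m ≤ i + 1) :
    sojourn s a m (i + 1) - ∑ j ∈ Finset.Icc m (i + 1), (s j - a j) =
      max (sojourn s a m i - ∑ j ∈ Finset.Icc m i, (s j - a j))
        (a (i + 1) - ∑ j ∈ Finset.Icc m i, (s j - a j)) := by
  rw [sojourn_add_one s a h, sum_Icc_add_one h, max_sub_sub_right]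
  rcases le_total (sojourn s a m i) (a (i + 1)) with hle | hle
  · rw [max_eq_right (by linarith), max_eq_right hle]; ring
  · rw [max_eq_left (by linarith), max_eq_left hle]; ring

lemma sojourn_sub_sum_le_Phi_add_Mx {n : ℤ} (h : m - 1 ≤ i) (hin : i ≤ n) :
    sojourn s a m i - ∑ j ∈ Finset.Icc m i, (s j - a j) ≤
      Phi m n (fun j => a j - s j) + Mx m n a := by
  induction i, h using Int.leInduction with
  | base => simp [add_nonneg (Phi_nonneg _ _ _) (Mx_nonneg _ _ _)]
  | succ i hi ih =>
    rw [sojourn_sub_sum_add_one s a (by omega)]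
    refine max_le (ih (by omega)) ?_
    have hsum : -∑ j ∈ Finset.Icc m i, (s j - a j) ≤ Phi m n (fun j => a j - s j) := by
      simpa [← Finset.sum_neg_distrib] using sum_Icc_le_Phi (I := fun j => a j - s j) hi (by omega)
    have hnew : a (i + 1) ≤ Mx m n a := (le_abs_self _).trans (abs_le_Mx (by omega) hin)
    linarith

end Sojourn

theorem Phi_emptyStart_two_general (m n : ℤ) (I0 I1 I2 : ℤ → ℝ) :
    Phi m n (fun i => Dm0 I1 I2 m i - I0 i) ≤
      Phi m n (fun i => I1 i - I0 i) + Phi m n (fun i => I2 i - I1 i) + Mx m n I2 := by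
  have hrhs := add_nonneg (add_nonneg (Phi_nonneg m n (fun i => I1 i - I0 i))
    (Phi_nonneg m n (fun i => I2 i - I1 i))) (Mx_nonneg m n I2)
  refine Phi_le_of_forall_sum_le hrhs fun i hmi hin => ?_
  have hD := sum_Dm0_eq I1 I2 (m := m) (i := i) (by omega)
  have hbound := sojourn_sub_sum_le_Phi_add_Mx I1 I2 (m := m) (i := i) (by omega) hin
  have hfirst := sum_Icc_le_Phi (I := fun j => I1 j - I0 j) (n := n) (by omega : m - 1 ≤ i) hin
  simp only [Finset.sum_sub_distrib] at hD hbound hfirst ⊢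
  linarith

/-- Base case `k = 2`:
`Φ_{m,n}(D_{m,0}(I¹,I²) - I⁰) ≤ Φ_{m,n}(I¹-I⁰) + Φ_{m,n}(I²-I¹) + M_{m,n}(I²)`. -/
theorem Phi_emptyStart_two (m n : ℤ) (hmn : m ≤ n) (I0 I1 I2 : ℤ → ℝ) :
    Phi m n (fun i => Dm0 I1 I2 m i - I0 i) ≤
      Phi m n (fun i => I1 i - I0 i) + Phi m n (fun i => I2 i - I1 i) + Mx m n I2 :=
  Phi_emptyStart_two_general m n I0 I1 I2

end SH
end

section
/- The map Q: C(ℝ)×C(ℝ) → C(ℝ) defined by Q(f,g)(t) = f(t) + [W_0(f-g) + inf_{0≤s≤t}(f(s)-g(s))]^- for t ≥ 0, and Q(f,g)(t) = f(t) - [W_t(f-g) + inf_{t<s≤0}(f(s)-f(t)-(g(s)-g(t)))]^- for t < 0, where W_t(h) = sup_{s≤t}(h(t)-h(s)), is NOT continuous with respect to the topology of uniform convergence on compact sets: there exists a sequence (f^n, g^n) → (f, g) in C(ℝ)² with Q(f^n, g^n) not converging to Q(f,g). -/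
/-!
Take `g^n = id` and let `f^n → 0` be a spike of depth `2n` at `-(n+1)`. The spike makes
`W_0(f^n - id) ≥ n - 1`, which absorbs the running infimum `inf_{[0,t]} (-s) = -t`, so
`Q(f^n, id)(t) = f^n(t) = 0` for `0 ≤ t ≤ n - 1`, whereas `Q(0, id)(t) = t`.
-/

open Filter

namespace SH

/-- `W_t(h) = sup_{s ≤ t} (h(t) - h(s))`. -/
noncomputable def Wt (t : ℝ) (h : ℝ → ℝ) : ℝ :=
  sSup ((fun s => h t - h s) '' Set.Iic t)

/-- The continuum queueing map `Q`. -/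
noncomputable def Qc (f g : ℝ → ℝ) (t : ℝ) : ℝ :=
  if 0 ≤ t then
    f t + negpart (Wt 0 (fun x => f x - g x) +
      sInf ((fun s => f s - g s) '' Set.Icc 0 t))
  else
    f t - negpart (Wt t (fun x => f x - g x) +
      sInf ((fun s => f s - f t - (g s - g t)) '' Set.Ioc t 0))

open Set Topology

lemma negpart_of_nonneg {x : ℝ} (h : 0 ≤ x) : negpart x = 0 :=
  max_eq_right (by linarith)

lemma negpart_of_nonpos {x : ℝ} (h : x ≤ 0) : negpart x = -x :=
  max_eq_left (by linarith)

lemma sub_le_Wt {h : ℝ → ℝ} {m t s : ℝ} (hm : ∀ r ≤ t, m ≤ h r) (hs : s ≤ t) :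
    h t - h s ≤ Wt t h := by
  refine le_csSup ⟨h t - m, ?_⟩ ⟨s, hs, rfl⟩
  rintro _ ⟨r, hr, rfl⟩
  linarith [hm r hr]

lemma Wt_eq_zero_of_antitone {h : ℝ → ℝ} (hh : Antitone h) (t : ℝ) : Wt t h = 0 := by
  have : Monotone fun s => h t - h s := fun _ _ hrs => sub_le_sub_left (hh hrs) _
  rw [Wt, (this.map_isGreatest isGreatest_Iic).csSup_eq, sub_self]

lemma sInf_image_Icc_of_antitone {h : ℝ → ℝ} (hh : Antitone h) {a b : ℝ} (hab : a ≤ b) :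
    sInf (h '' Icc a b) = h b :=
  (hh.map_isGreatest (isGreatest_Icc hab)).csInf_eq

lemma Qc_eq_of_nonneg {f g : ℝ → ℝ} {t : ℝ} (ht : 0 ≤ t)
    (h : 0 ≤ Wt 0 (fun x => f x - g x) + sInf ((fun s => f s - g s) '' Icc 0 t)) :
    Qc f g t = f t := by
  rw [Qc, if_pos ht, negpart_of_nonneg h, add_zero]

lemma antitone_zero_sub_id : Antitone fun x : ℝ => 0 - id x :=
  fun _ _ h => by simpa using h

lemma Qc_zero_id_of_nonneg {t : ℝ} (ht : 0 ≤ t) : Qc (fun _ => 0) id t = t := by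
  rw [Qc, if_pos ht, Wt_eq_zero_of_antitone antitone_zero_sub_id,
    sInf_image_Icc_of_antitone antitone_zero_sub_id ht, negpart_of_nonpos (by simpa using ht)]
  simp

noncomputable def tent (c a x : ℝ) : ℝ := a * max (1 - |x - c|) 0

lemma continuous_tent (c a : ℝ) : Continuous (tent c a) := by
  unfold tent; fun_prop

lemma tent_center (c a : ℝ) : tent c a c = a := by
  simp [tent]

lemma tent_eq_zero_of_le {c a x : ℝ} (hx : c + 1 ≤ x) : tent c a x = 0 := by
  have : 1 - |x - c| ≤ 0 := by linarith [le_abs_self (x - c)]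
  rw [tent, max_eq_right this, mul_zero]

lemma le_tent {c a : ℝ} (ha : a ≤ 0) (x : ℝ) : a ≤ tent c a x := by
  have h1 : max (1 - |x - c|) 0 ≤ 1 := max_le (by linarith [abs_nonneg (x - c)]) zero_le_one
  have h0 : 0 ≤ max (1 - |x - c|) 0 := le_max_right _ _
  rw [tent]; nlinarith

/-- The paper's `f^n`. -/
noncomputable def spike (n : ℕ) : ℝ → ℝ := tent (-(n + 1)) (-(2 * n))

lemma spike_eq_zero {n : ℕ} {x : ℝ} (hx : -(n : ℝ) ≤ x) : spike n x = 0 :=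
  tent_eq_zero_of_le (by linarith)

lemma spike_center (n : ℕ) : spike n (-(n + 1)) = -(2 * n) :=
  tent_center _ _

lemma sub_one_le_Wt_spike_sub_id (n : ℕ) : (n : ℝ) - 1 ≤ Wt 0 (fun x => spike n x - id x) := by
  have hn : (0 : ℝ) ≤ n := n.cast_nonneg
  have hlow : ∀ r ≤ (0 : ℝ), -(2 * n) ≤ spike n r - id r := fun r hr => by
    have := le_tent (c := -(n + 1)) (by linarith : -(2 * (n : ℝ)) ≤ 0) r
    rw [spike, id]; linarith
  have hW := sub_le_Wt hlow (show -((n : ℝ) + 1) ≤ 0 by linarith)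
  rw [spike_eq_zero (neg_nonpos.mpr hn), spike_center, id, id] at hW
  linarith

lemma tendstoLocallyUniformly_of_eqOn_Ici {ι α β : Type*} [TopologicalSpace α] [LinearOrder α]
    [OrderTopology α] [NoMinOrder α] [UniformSpace β] {p : Filter ι} {F : ι → α → β}
    {f : α → β} {a : ι → α} (ha : Tendsto a p atBot) (hF : ∀ i, EqOn (F i) f (Ici (a i))) :
    TendstoLocallyUniformly F f p := by
  intro u hu x
  obtain ⟨b, hb⟩ := exists_lt x
  refine ⟨Ioi b, Ioi_mem_nhds hb, ?_⟩
  filter_upwards [ha.eventually_le_atBot b] with i hi y hy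
  rw [hF i (hi.trans hy.le)]
  exact refl_mem_uniformity hu

lemma tendstoLocallyUniformly_spike : TendstoLocallyUniformly spike (fun _ => 0) atTop :=
  tendstoLocallyUniformly_of_eqOn_Ici (a := fun n => -(n : ℝ))
    (tendsto_neg_atTop_atBot.comp tendsto_natCast_atTop_atTop) fun _ _ => spike_eq_zero

lemma Qc_spike_id {n : ℕ} {t : ℝ} (ht : 0 ≤ t) (htn : t ≤ n - 1) : Qc (spike n) id t = 0 := by
  have hn : (0 : ℝ) ≤ n := n.cast_nonneg
  have hzero : EqOn (fun s => spike n s - id s) (fun s => 0 - id s) (Icc 0 t) :=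
    fun s hs => by dsimp only; rw [spike_eq_zero (by linarith [hs.1])]
  have hinf : sInf ((fun s => spike n s - id s) '' Icc 0 t) = -t := by
    rw [hzero.image_eq, sInf_image_Icc_of_antitone antitone_zero_sub_id ht, id, zero_sub]
  rw [Qc_eq_of_nonneg ht (by linarith [sub_one_le_Wt_spike_sub_id n]), spike_eq_zero (by linarith)]

/-- The continuum queueing map `Q` is not continuous for uniform convergence on
compact sets. -/
theorem Qc_not_continuous :
    ∃ (F G : ℕ → ℝ → ℝ) (f g : ℝ → ℝ),
      (∀ n, Continuous (F n)) ∧ (∀ n, Continuous (G n)) ∧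
      Continuous f ∧ Continuous g ∧
      TendstoLocallyUniformly F f atTop ∧
      TendstoLocallyUniformly G g atTop ∧
      ¬ TendstoLocallyUniformly (fun n => Qc (F n) (G n)) (Qc f g) atTop := by
  refine ⟨spike, fun _ => id, fun _ => 0, id, fun _ => continuous_tent _ _,
    fun _ => continuous_id, continuous_const, continuous_id, tendstoLocallyUniformly_spike,
    TendstoUniformly.tendstoLocallyUniformly fun _ hu =>
      Eventually.of_forall fun _ _ => refl_mem_uniformity hu, fun h => ?_⟩
  have hlim : Tendsto (fun n => Qc (spike n) id 1) atTop (𝓝 1) := by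
    simpa [Qc_zero_id_of_nonneg zero_le_one] using
      (tendstoLocallyUniformlyOn_univ.mpr h).tendsto_at (mem_univ (1 : ℝ))
  have hzero : Tendsto (fun n => Qc (spike n) id 1) atTop (𝓝 0) := by
    refine tendsto_const_nhds.congr' ?_
    filter_upwards [eventually_ge_atTop 2] with n hn
    exact (Qc_spike_id zero_le_one (by linarith [(Nat.ofNat_le_cast.mpr hn : (2 : ℝ) ≤ n)])).symm
  exact one_ne_zero (tendsto_nhds_unique hlim hzero)

end SH
end
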